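/- arXiv:2301.12114 — 2 statements merged into one kernel-verified Lean document; each statement's English description precedes it below -/
import Mathlib

section
/- Let A be an associative k-algebra and φ : A → A a derivation. If f ∈ A* is such that ker f contains a two-sided ideal of A of finite codimension (i.e. f lies in the finite dual A⁰), then ker(f ∘ φ) also contains a two-sided ideal of A of finite codimension; that is, φ*(A⁰) ⊆ A⁰. -/
/-! The submodule `I ⊓ φ⁻¹(I)` does the job. The Leibniz rule makes it a two-sided ideal, it
lies in `ker (f ∘ φ)` since `I ≤ ker f`, and it has finite codimension because it is the kernel
of `A → A/I × A/I, a ↦ (a mod I, φ a mod I)`. -/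

section FiniteCodimension

variable {K M N : Type*} [DivisionRing K] [AddCommGroup M] [Module K M]
  [AddCommGroup N] [Module K N]

theorem LinearMap.finiteDimensional_quotient_ker (g : M →ₗ[K] N) [FiniteDimensional K N] :
    FiniteDimensional K (M ⧸ LinearMap.ker g) :=
  g.quotKerEquivRange.symm.finiteDimensional

theorem Submodule.finiteDimensional_quotient_comap (g : M →ₗ[K] N) (p : Submodule K N)
    [FiniteDimensional K (N ⧸ p)] : FiniteDimensional K (M ⧸ p.comap g) := by
  have hker : LinearMap.ker (p.mkQ ∘ₗ g) = p.comap g := by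
    rw [LinearMap.ker_comp, Submodule.ker_mkQ]
  exact hker ▸ (p.mkQ ∘ₗ g).finiteDimensional_quotient_ker

theorem Submodule.finiteDimensional_quotient_inf (p q : Submodule K M)
    [FiniteDimensional K (M ⧸ p)] [FiniteDimensional K (M ⧸ q)] :
    FiniteDimensional K (M ⧸ (p ⊓ q)) := by
  have hker : LinearMap.ker (p.mkQ.prod q.mkQ) = p ⊓ q := by
    rw [LinearMap.ker_prod, Submodule.ker_mkQ, Submodule.ker_mkQ]
  exact hker ▸ (p.mkQ.prod q.mkQ).finiteDimensional_quotient_ker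

end FiniteCodimension

section Leibniz

variable {k A : Type*} [Semiring k] [NonUnitalNonAssocSemiring A] [Module k A]
  {φ : A →ₗ[k] A} {I : Submodule k A}

theorem Submodule.mul_mem_inf_comap_of_leibniz_left
    (hφ : ∀ a b : A, φ (a * b) = φ a * b + a * φ b) (hI : ∀ a : A, ∀ x ∈ I, a * x ∈ I) :
    ∀ a : A, ∀ x ∈ I ⊓ I.comap φ, a * x ∈ I ⊓ I.comap φ := by
  rintro a x ⟨hx, hφx⟩
  refine ⟨hI a x hx, ?_⟩
  show φ (a * x) ∈ I
  rw [hφ]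
  exact I.add_mem (hI (φ a) x hx) (hI a (φ x) hφx)

theorem Submodule.mul_mem_inf_comap_of_leibniz_right
    (hφ : ∀ a b : A, φ (a * b) = φ a * b + a * φ b) (hI : ∀ a : A, ∀ x ∈ I, x * a ∈ I) :
    ∀ a : A, ∀ x ∈ I ⊓ I.comap φ, x * a ∈ I ⊓ I.comap φ := by
  rintro a x ⟨hx, hφx⟩
  refine ⟨hI a x hx, ?_⟩
  show φ (x * a) ∈ I
  rw [hφ]
  exact I.add_mem (hI a (φ x) hφx) (hI (φ a) x hx)

end Leibniz

theorem deriv_dual_preserves_finite_dual_general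
    {k A : Type} [Field k] [Ring A] [Algebra k A]
    (φ : A →ₗ[k] A) (hφ : ∀ a b : A, φ (a * b) = φ a * b + a * φ b)
    (f : A →ₗ[k] k)
    (hf : ∃ I : Submodule k A,
      (∀ a : A, ∀ x ∈ I, a * x ∈ I) ∧ (∀ a : A, ∀ x ∈ I, x * a ∈ I) ∧
      FiniteDimensional k (A ⧸ I) ∧ I ≤ LinearMap.ker f) :
    ∃ I : Submodule k A,
      (∀ a : A, ∀ x ∈ I, a * x ∈ I) ∧ (∀ a : A, ∀ x ∈ I, x * a ∈ I) ∧
      FiniteDimensional k (A ⧸ I) ∧ I ≤ LinearMap.ker (f ∘ₗ φ) := by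
  obtain ⟨I, hIleft, hIright, hIfin, hIf⟩ := hf
  have := I.finiteDimensional_quotient_comap φ
  refine ⟨I ⊓ I.comap φ, I.mul_mem_inf_comap_of_leibniz_left hφ hIleft,
    I.mul_mem_inf_comap_of_leibniz_right hφ hIright, I.finiteDimensional_quotient_inf _, ?_⟩
  rw [LinearMap.ker_comp]
  exact inf_le_right.trans (Submodule.comap_mono hIf)

/-- Let `A` be an associative `k`-algebra and `φ : A → A` a derivation.  If `f ∈ A*` lies
in the finite dual `A⁰` (its kernel contains a two-sided ideal of finite codimension),
then so does `φ*(f) = f ∘ φ`; that is, `φ*(A⁰) ⊆ A⁰`. -/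
theorem deriv_dual_preserves_finite_dual
    {k A : Type} [Field k] [CharZero k] [Ring A] [Algebra k A]
    (φ : A →ₗ[k] A) (hφ : ∀ a b : A, φ (a * b) = φ a * b + a * φ b)
    (f : A →ₗ[k] k)
    (hf : ∃ I : Submodule k A,
      (∀ a : A, ∀ x ∈ I, a * x ∈ I) ∧ (∀ a : A, ∀ x ∈ I, x * a ∈ I) ∧
      FiniteDimensional k (A ⧸ I) ∧ I ≤ LinearMap.ker f) :
    ∃ I : Submodule k A,
      (∀ a : A, ∀ x ∈ I, a * x ∈ I) ∧ (∀ a : A, ∀ x ∈ I, x * a ∈ I) ∧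
      FiniteDimensional k (A ⧸ I) ∧ I ≤ LinearMap.ker (f ∘ₗ φ) :=
  deriv_dual_preserves_finite_dual_general φ hφ f hf
end

section
/- Let (C, ψ_C) be a Coder pair and (M, ρ_l, ρ_r, ψ_M) a bicomodule of (C, ψ_C). Then for every n ≥ 1 and every f ∈ C_c^n(M, C) = Hom_k(M, C^{⊗n}), one has δ_c(ω(f)) = ω(δ_c(f)); i.e. the maps δ_c and ω commute. -/
/-!
Extend `ψ_C` to the derivation `ψ⁽ⁿ⁾ = Σⱼ Id ⊗ ⋯ ⊗ ψ_C ⊗ ⋯ ⊗ Id` of `C^{⊗(n+1)}`; then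
`ω(f) = ψ⁽ⁿ⁾ ∘ f − f ∘ ψ_M` is the defect of `f` in intertwining the derivations. This defect obeys a
Leibniz rule under `⊗`, and every structure map occurring in `δ_c` (`Δ` inserted in any slot, the
coactions `ρ_l`, `ρ_r`, and the re-bracketings) intertwines the derivations, by the coderivation
axioms. So the defect of each of the three kinds of term of `δ_c(f)` is the same term built from
`ω(f)`, and `ω` commutes with `δ_c` term by term.
-/

open TensorProduct LinearMap

variable (k : Type) [Field k]

/-- Iterated tensor power: `Tpow k C n = C^{⊗(n+1)}`, right-nested. -/
noncomputable def Tpow (C : ModuleCat.{0} k) : ℕ → ModuleCat.{0} k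
  | 0 => C
  | n + 1 => ModuleCat.of k (C ⊗[k] Tpow C n)

/-- `Id^{⊗ i} ⊗ Δ ⊗ Id^{⊗ (n - i)} : C^{⊗(n+1)} → C^{⊗(n+2)}`, applying `Δ` to the
`i`-th tensor factor (0-based). -/
noncomputable def insDelta (C : ModuleCat.{0} k) (Δ : C →ₗ[k] C ⊗[k] C) :
    (n : ℕ) → Fin (n + 1) → (Tpow k C n →ₗ[k] Tpow k C (n + 1))
  | 0, _ => Δ
  | n + 1, i =>
    i.cases
      ((TensorProduct.assoc k C C (Tpow k C n)).toLinearMap ∘ₗ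
        LinearMap.rTensor (Tpow k C n) Δ)
      (fun j => LinearMap.lTensor C (insDelta C Δ n j))

/-- `Id^{⊗ i} ⊗ ψ ⊗ Id^{⊗ (n - i)} : C^{⊗(n+1)} → C^{⊗(n+1)}`, applying `ψ` to the
`i`-th tensor factor (0-based). -/
noncomputable def psiAt (C : ModuleCat.{0} k) (ψ : C →ₗ[k] C) :
    (n : ℕ) → Fin (n + 1) → (Tpow k C n →ₗ[k] Tpow k C n)
  | 0, _ => ψ
  | n + 1, i =>
    i.cases (LinearMap.rTensor (Tpow k C n) ψ)
      (fun j => LinearMap.lTensor C (psiAt C ψ n j))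

/-- The canonical identification `C^{⊗(n+1)} ⊗ C ≅ C^{⊗(n+2)}`. -/
noncomputable def rshift (C : ModuleCat.{0} k) :
    (n : ℕ) → ((Tpow k C n) ⊗[k] C →ₗ[k] Tpow k C (n + 1))
  | 0 => LinearMap.id
  | n + 1 => LinearMap.lTensor C (rshift C n) ∘ₗ
      (TensorProduct.assoc k C (Tpow k C n) C).toLinearMap

variable {k}

/-- The Hochschild coalgebra coboundary
`δ_c(f) = (Id_C ⊗ f) ∘ ρ_l + Σ_{i=1}^{n} (−1)^i (Id^{⊗(i−1)} ⊗ Δ ⊗ Id^{⊗(n−i)}) ∘ f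
          + (−1)^{n+1} (f ⊗ Id_C) ∘ ρ_r`
for `f ∈ C_c^{n+1}(M, C) = Hom(M, C^{⊗(n+1)})`. -/
noncomputable def deltaC (C : ModuleCat.{0} k) (Δ : C →ₗ[k] C ⊗[k] C)
    (M : ModuleCat.{0} k) (ρl : M →ₗ[k] C ⊗[k] M) (ρr : M →ₗ[k] M ⊗[k] C)
    (n : ℕ) (f : M →ₗ[k] Tpow k C n) : M →ₗ[k] Tpow k C (n + 1) :=
  (show (M : Type) →ₗ[k] Tpow k C (n + 1) from LinearMap.lTensor C f ∘ₗ ρl)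
    + ∑ j : Fin (n + 1), ((-1 : ℤ) ^ (j.val + 1)) • (insDelta k C Δ n j ∘ₗ f)
    + ((-1 : ℤ) ^ (n + 2)) • (rshift k C n ∘ₗ LinearMap.rTensor C f ∘ₗ ρr)

/-- The operator `ω(f) = Σ_{i=1}^{n} (Id^{⊗(i−1)} ⊗ ψ_C ⊗ Id^{⊗(n−i)}) ∘ f − f ∘ ψ_M`
for `f ∈ C_c^{n+1}(M, C) = Hom(M, C^{⊗(n+1)})`. -/
noncomputable def omegaC (C : ModuleCat.{0} k) (ψC : C →ₗ[k] C)
    (M : ModuleCat.{0} k) (ψM : M →ₗ[k] M)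
    (n : ℕ) (f : M →ₗ[k] Tpow k C n) : M →ₗ[k] Tpow k C n :=
  (∑ j : Fin (n + 1), psiAt k C ψC n j ∘ₗ f) - f ∘ₗ ψM

-- lets rewriting and instance search see `Tpow k C (n + 1)` as `C ⊗[k] Tpow k C n`
attribute [reducible] Tpow

section TensorDer

variable {R V V' W W' : Type*} [CommRing R] [AddCommGroup V] [AddCommGroup V'] [AddCommGroup W]
  [AddCommGroup W'] [Module R V] [Module R V'] [Module R W] [Module R W']

def tensorDer (D : V →ₗ[R] V) (E : W →ₗ[R] W) : V ⊗[R] W →ₗ[R] V ⊗[R] W :=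
  rTensor W D + lTensor V E

theorem tensorDer_comp_rTensor_sub (D : V →ₗ[R] V) (D' : V' →ₗ[R] V') (E : W →ₗ[R] W)
    (φ : V →ₗ[R] V') :
    tensorDer D' E ∘ₗ rTensor W φ - rTensor W φ ∘ₗ tensorDer D E
      = rTensor W (D' ∘ₗ φ - φ ∘ₗ D) := by
  ext x y
  simp [tensorDer]

theorem tensorDer_comp_lTensor_sub (D : V →ₗ[R] V) (E : W →ₗ[R] W) (E' : W' →ₗ[R] W')
    (g : W →ₗ[R] W') :
    tensorDer D E' ∘ₗ lTensor V g - lTensor V g ∘ₗ tensorDer D E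
      = lTensor V (E' ∘ₗ g - g ∘ₗ E) := by
  ext x y
  simp [tensorDer]

theorem rTensor_comp_tensorDer {D : V →ₗ[R] V} {D' : V' →ₗ[R] V'} (E : W →ₗ[R] W)
    {φ : V →ₗ[R] V'} (hφ : φ ∘ₗ D = D' ∘ₗ φ) :
    rTensor W φ ∘ₗ tensorDer D E = tensorDer D' E ∘ₗ rTensor W φ := by
  rw [eq_comm, ← sub_eq_zero, tensorDer_comp_rTensor_sub, hφ, sub_self, rTensor_zero]

theorem lTensor_comp_tensorDer (D : V →ₗ[R] V) {E : W →ₗ[R] W} {E' : W' →ₗ[R] W'}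
    {g : W →ₗ[R] W'} (hg : g ∘ₗ E = E' ∘ₗ g) :
    lTensor V g ∘ₗ tensorDer D E = tensorDer D E' ∘ₗ lTensor V g := by
  rw [eq_comm, ← sub_eq_zero, tensorDer_comp_lTensor_sub, hg, sub_self, lTensor_zero]

theorem assoc_comp_tensorDer_tensorDer {U : Type*} [AddCommGroup U] [Module R U]
    (D : U →ₗ[R] U) (E : V →ₗ[R] V) (F : W →ₗ[R] W) :
    (TensorProduct.assoc R U V W).toLinearMap ∘ₗ tensorDer (tensorDer D E) F
      = tensorDer D (tensorDer E F) ∘ₗ (TensorProduct.assoc R U V W).toLinearMap := by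
  ext x y z
  simp [tensorDer, add_assoc]

end TensorDer

noncomputable def psiSum (C : ModuleCat.{0} k) (ψ : C →ₗ[k] C) (n : ℕ) :
    Tpow k C n →ₗ[k] Tpow k C n :=
  ∑ j : Fin (n + 1), psiAt k C ψ n j

section PsiSum

variable (C : ModuleCat.{0} k) (ψ : C →ₗ[k] C)

theorem psiSum_zero : psiSum C ψ 0 = ψ := by
  simp [psiSum, psiAt]

theorem psiSum_succ (n : ℕ) : psiSum C ψ (n + 1) = tensorDer ψ (psiSum C ψ n) := by
  rw [psiSum, Fin.sum_univ_succ, tensorDer, psiSum]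
  simp only [psiAt, Fin.cases_zero, Fin.cases_succ]
  exact congrArg _ (map_sum (lTensorHom (M := C)) _ _).symm

theorem insDelta_comp_psiSum (Δ : C →ₗ[k] C ⊗[k] C) (hψ : Δ ∘ₗ ψ = tensorDer ψ ψ ∘ₗ Δ) :
    ∀ (n : ℕ) (j : Fin (n + 1)),
      insDelta k C Δ n j ∘ₗ psiSum C ψ n = psiSum C ψ (n + 1) ∘ₗ insDelta k C Δ n j
  | 0, _ => by rw [psiSum_succ, psiSum_zero]; exact hψ
  | n + 1, j => by
    induction j using Fin.cases with
    | zero =>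
      show ((TensorProduct.assoc k C C (Tpow k C n)).toLinearMap ∘ₗ rTensor _ Δ) ∘ₗ _ = _
      rw [psiSum_succ, psiSum_succ, psiSum_succ, comp_assoc, rTensor_comp_tensorDer _ hψ,
        ← comp_assoc, assoc_comp_tensorDer_tensorDer, comp_assoc]
      rfl
    | succ j =>
      show lTensor C (insDelta k C Δ n j) ∘ₗ _ = _
      rw [psiSum_succ, psiSum_succ,
        lTensor_comp_tensorDer _ (insDelta_comp_psiSum Δ hψ n j)]
      rfl

theorem rshift_comp_tensorDer :
    ∀ n : ℕ, rshift k C n ∘ₗ tensorDer (psiSum C ψ n) ψ = psiSum C ψ (n + 1) ∘ₗ rshift k C n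
  | 0 => by rw [psiSum_succ, psiSum_zero]; rfl
  | n + 1 => by
    show (lTensor C (rshift k C n) ∘ₗ (TensorProduct.assoc k C (Tpow k C n) C).toLinearMap) ∘ₗ _
      = psiSum C ψ (n + 2) ∘ₗ
        (lTensor C (rshift k C n) ∘ₗ (TensorProduct.assoc k C (Tpow k C n) C).toLinearMap)
    rw [psiSum_succ, psiSum_succ, comp_assoc, assoc_comp_tensorDer_tensorDer,
      ← comp_assoc, lTensor_comp_tensorDer _ (rshift_comp_tensorDer n), comp_assoc]

end PsiSum

section Omega

variable {C : ModuleCat.{0} k} {ψC : C →ₗ[k] C} {M : ModuleCat.{0} k} {ψM : M →ₗ[k] M}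

theorem omegaC_eq (n : ℕ) (f : M →ₗ[k] Tpow k C n) :
    omegaC C ψC M ψM n f = psiSum C ψC n ∘ₗ f - f ∘ₗ ψM := by
  rw [omegaC, psiSum]
  exact congrArg (· - _) (map_sum (lcomp k _ f) _ _).symm

theorem omegaC_add (n : ℕ) (f g : M →ₗ[k] Tpow k C n) :
    omegaC C ψC M ψM n (f + g) = omegaC C ψC M ψM n f + omegaC C ψC M ψM n g := by
  simp only [omegaC_eq, comp_add, add_comp]
  abel

theorem omegaC_zsmul (n : ℕ) (z : ℤ) (f : M →ₗ[k] Tpow k C n) :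
    omegaC C ψC M ψM n (z • f) = z • omegaC C ψC M ψM n f := by
  simp only [omegaC_eq, comp_smul, smul_comp, smul_sub]

theorem omegaC_sum {ι : Type*} (n : ℕ) (s : Finset ι) (f : ι → (M →ₗ[k] Tpow k C n)) :
    omegaC C ψC M ψM n (∑ i ∈ s, f i) = ∑ i ∈ s, omegaC C ψC M ψM n (f i) :=
  map_sum (AddMonoidHom.mk' (omegaC C ψC M ψM n) (omegaC_add n)) f s

theorem omegaC_insDelta_comp {Δ : C →ₗ[k] C ⊗[k] C} (hψC : Δ ∘ₗ ψC = tensorDer ψC ψC ∘ₗ Δ)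
    (n : ℕ) (j : Fin (n + 1)) (f : M →ₗ[k] Tpow k C n) :
    omegaC C ψC M ψM (n + 1) (insDelta k C Δ n j ∘ₗ f)
      = insDelta k C Δ n j ∘ₗ omegaC C ψC M ψM n f := by
  rw [omegaC_eq, omegaC_eq, comp_sub, ← comp_assoc, ← insDelta_comp_psiSum C ψC Δ hψC]
  rfl

theorem omegaC_lTensor_comp {ρl : M →ₗ[k] C ⊗[k] M} (hψl : ρl ∘ₗ ψM = tensorDer ψC ψM ∘ₗ ρl)
    (n : ℕ) (f : M →ₗ[k] Tpow k C n) :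
    omegaC C ψC M ψM (n + 1) (lTensor C f ∘ₗ ρl) = lTensor C (omegaC C ψC M ψM n f) ∘ₗ ρl := by
  rw [omegaC_eq, omegaC_eq, psiSum_succ, comp_assoc, hψl, ← comp_assoc, ← comp_assoc, ← sub_comp,
    tensorDer_comp_lTensor_sub]

theorem omegaC_rshift_comp {ρr : M →ₗ[k] M ⊗[k] C} (hψr : ρr ∘ₗ ψM = tensorDer ψM ψC ∘ₗ ρr)
    (n : ℕ) (f : M →ₗ[k] Tpow k C n) :
    omegaC C ψC M ψM (n + 1) (rshift k C n ∘ₗ rTensor C f ∘ₗ ρr)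
      = rshift k C n ∘ₗ rTensor C (omegaC C ψC M ψM n f) ∘ₗ ρr := by
  rw [omegaC_eq, omegaC_eq, ← tensorDer_comp_rTensor_sub ψM _ ψC f, ← comp_assoc,
    ← rshift_comp_tensorDer]
  simp only [sub_comp, comp_sub, comp_assoc, hψr]

end Omega

theorem deltaC_omegaC_comm_general
    (C : ModuleCat.{0} k) (Δ : C →ₗ[k] C ⊗[k] C)
    (ψC : C →ₗ[k] C)
    (hψC : Δ ∘ₗ ψC = LinearMap.rTensor C ψC ∘ₗ Δ + LinearMap.lTensor C ψC ∘ₗ Δ)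
    (M : ModuleCat.{0} k)
    (ρl : M →ₗ[k] C ⊗[k] M) (ρr : M →ₗ[k] M ⊗[k] C) (ψM : M →ₗ[k] M)
    (hψl : ρl ∘ₗ ψM = LinearMap.lTensor C ψM ∘ₗ ρl + LinearMap.rTensor M ψC ∘ₗ ρl)
    (hψr : ρr ∘ₗ ψM = LinearMap.rTensor C ψM ∘ₗ ρr + LinearMap.lTensor M ψC ∘ₗ ρr) :
    ∀ (n : ℕ) (f : M →ₗ[k] Tpow k C n),
      deltaC C Δ M ρl ρr n (omegaC C ψC M ψM n f)
        = omegaC C ψC M ψM (n + 1) (deltaC C Δ M ρl ρr n f) := by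
  intro n f
  have hΔψ : Δ ∘ₗ ψC = tensorDer ψC ψC ∘ₗ Δ := by rw [hψC, tensorDer, add_comp]
  have hρlψ : ρl ∘ₗ ψM = tensorDer ψC ψM ∘ₗ ρl := by rw [hψl, tensorDer, add_comp, add_comm]
  have hρrψ : ρr ∘ₗ ψM = tensorDer ψM ψC ∘ₗ ρr := by rw [hψr, tensorDer, add_comp]
  simp only [deltaC]
  rw [omegaC_add, omegaC_add, omegaC_sum, omegaC_zsmul, omegaC_lTensor_comp hρlψ,
    omegaC_rshift_comp hρrψ]
  congr 2
  refine Finset.sum_congr rfl fun j _ => ?_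
  rw [omegaC_zsmul, omegaC_insDelta_comp hΔψ]

/-- For a Coder pair `(C, ψ_C)` and a bicomodule `(M, ρ_l, ρ_r, ψ_M)` over it, the
coboundary `δ_c` and the operator `ω` commute: `δ_c(ω(f)) = ω(δ_c(f))` for every
`n ≥ 1` and every `f ∈ C_c^n(M, C) = Hom(M, C^{⊗n})`
(here `f : M →ₗ Tpow k C n` represents an element of `C_c^{n+1}(M,C)`;
as `n` runs over `ℕ` this covers all cochain degrees `≥ 1`). -/
theorem deltaC_omegaC_comm [CharZero k]
    (C : ModuleCat.{0} k) (Δ : C →ₗ[k] C ⊗[k] C)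
    (hΔ : (TensorProduct.assoc k C C C).toLinearMap ∘ₗ LinearMap.rTensor C Δ ∘ₗ Δ
        = LinearMap.lTensor C Δ ∘ₗ Δ)
    (ψC : C →ₗ[k] C)
    (hψC : Δ ∘ₗ ψC = LinearMap.rTensor C ψC ∘ₗ Δ + LinearMap.lTensor C ψC ∘ₗ Δ)
    (M : ModuleCat.{0} k)
    (ρl : M →ₗ[k] C ⊗[k] M) (ρr : M →ₗ[k] M ⊗[k] C) (ψM : M →ₗ[k] M)
    (hl : (TensorProduct.assoc k C C M).toLinearMap ∘ₗ LinearMap.rTensor M Δ ∘ₗ ρl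
        = LinearMap.lTensor C ρl ∘ₗ ρl)
    (hr : (TensorProduct.assoc k M C C).toLinearMap ∘ₗ LinearMap.rTensor C ρr ∘ₗ ρr
        = LinearMap.lTensor M Δ ∘ₗ ρr)
    (hlr : LinearMap.lTensor C ρr ∘ₗ ρl
        = (TensorProduct.assoc k C M C).toLinearMap ∘ₗ LinearMap.rTensor C ρl ∘ₗ ρr)
    (hψl : ρl ∘ₗ ψM = LinearMap.lTensor C ψM ∘ₗ ρl + LinearMap.rTensor M ψC ∘ₗ ρl)
    (hψr : ρr ∘ₗ ψM = LinearMap.rTensor C ψM ∘ₗ ρr + LinearMap.lTensor M ψC ∘ₗ ρr) :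
    ∀ (n : ℕ) (f : M →ₗ[k] Tpow k C n),
      deltaC C Δ M ρl ρr n (omegaC C ψC M ψM n f)
        = omegaC C ψC M ψM (n + 1) (deltaC C Δ M ρl ρr n f) :=
  deltaC_omegaC_comm_general C Δ ψC hψC M ρl ρr ψM hψl hψr
end
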